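/- Let A be a complex d×d matrix whose eigenvalues all lie in {z : |z| ≤ 1, |arg z| ≤ (1/24)²}, diagonalizable as A = P D P^{−1} with κ = ‖P‖‖P^{−1}‖, and let M_n be the monic Chebyshev polynomial of degree n. Then for all sufficiently large n and all t ≤ T, |Σ_{s=0}^{t−n−1} C M_n(A) A^s B u_{t−n−s}| ≤ 2^{−n/2} ‖C‖ ‖B‖ κ T, for any row vector C, column vector B, and scalars u with |u_j| ≤ 1. -/

import Mathlib

/-!
Write an eigenvalue `z` of `A` as `z = (w + w⁻¹) / 2`, so that `T_n(z) = (wⁿ + w⁻ⁿ) / 2`.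
By the parallelogram law `‖w‖² + ‖w⁻¹‖² = 2 (‖z‖² + ‖z² - 1‖)`, and in the thin sector
`‖z‖ ≤ 1`, `|arg z| ≤ (1/24)²` the right side is at most `2 + 1/144`, which forces
`‖w‖, ‖w⁻¹‖ ≤ 21/20`. Hence `|M_n(z)| ≤ 2 (21/40)ⁿ ≤ 2^{-n/2}` for `n ≥ 3`. Diagonalizing
`A = P D P⁻¹` transfers this to `‖M_n(A) Aˢ‖ ≤ ‖P‖ ‖P⁻¹‖ 2^{-n/2}`, and the sum has at most
`T` terms, each with `|u_j| ≤ 1`.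
-/

open Matrix Polynomial
open scoped Matrix.Norms.L2Operator

noncomputable def evec {d : ℕ} (v : Fin d → ℂ) : EuclideanSpace ℂ (Fin d) :=
  (WithLp.equiv 2 (Fin d → ℂ)).symm v

/-- The monic Chebyshev polynomial `M_n = 2^{1-n} T_n` over `ℂ`. -/
noncomputable def monicCheb (n : ℕ) : ℂ[X] :=
  Polynomial.C ((2 : ℂ) ^ (1 - (n : ℤ))) * Polynomial.Chebyshev.T ℂ n

open ComplexConjugate

namespace Complex

theorem exists_half_add_inv_eq (z : ℂ) :
    ∃ w ≠ 0, (w + w⁻¹) / 2 = z ∧ ‖w‖ ^ 2 + ‖w⁻¹‖ ^ 2 = 2 * (‖z‖ ^ 2 + ‖z ^ 2 - 1‖) := by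
  obtain ⟨b, hb⟩ := IsAlgClosed.exists_eq_mul_self (z ^ 2 - 1)
  have hmul : (z + b) * (z - b) = 1 := by linear_combination hb
  have hinv : (z + b)⁻¹ = z - b := inv_eq_of_mul_eq_one_right hmul
  refine ⟨z + b, left_ne_zero_of_mul_eq_one hmul, by rw [hinv]; ring, ?_⟩
  rw [hinv, parallelogram_law_with_norm ℝ, hb, norm_mul, ← sq]

theorem abs_im_le_norm_mul_abs_arg (z : ℂ) : |z.im| ≤ ‖z‖ * |z.arg| := by
  rw [← norm_mul_sin_arg, abs_mul, abs_norm]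
  exact mul_le_mul_of_nonneg_left Real.abs_sin_le_abs (norm_nonneg z)

theorem norm_sq_add_norm_sq_sub_one_le {z : ℂ} (hz : ‖z‖ ≤ 1) :
    ‖z‖ ^ 2 + ‖z ^ 2 - 1‖ ≤ 1 + 2 * ‖z‖ * |z.im| := by
  have hsplit : z ^ 2 - 1 = z * (z - conj z) + ((‖z‖ ^ 2 : ℝ) - 1 : ℂ) := by
    rw [mul_sub, mul_conj, normSq_eq_norm_sq]; ring
  have hrot : ‖z * (z - conj z)‖ = 2 * ‖z‖ * |z.im| := by
    rw [sub_conj, norm_mul, norm_mul, norm_I, mul_one, norm_real, Real.norm_eq_abs, abs_mul,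
      abs_two]; ring
  have hrad : ‖((‖z‖ ^ 2 : ℝ) - 1 : ℂ)‖ = 1 - ‖z‖ ^ 2 := by
    rw [← ofReal_one, ← ofReal_sub, norm_real, Real.norm_eq_abs, abs_of_nonpos]
    · ring
    · nlinarith [norm_nonneg z]
  have := norm_add_le (z * (z - conj z)) ((‖z‖ ^ 2 : ℝ) - 1 : ℂ)
  rw [← hsplit, hrot, hrad] at this
  linarith

theorem norm_le_of_norm_sq_add_norm_inv_sq_le {w : ℂ} (hw : w ≠ 0)
    (h : ‖w‖ ^ 2 + ‖w⁻¹‖ ^ 2 ≤ 2 + 1 / 144) : ‖w‖ ≤ 21 / 20 := by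
  set x := ‖w‖ ^ 2
  have hx : 0 < x := by positivity
  have hxinv : x * ‖w⁻¹‖ ^ 2 = 1 := by
    rw [norm_inv, inv_pow, mul_inv_cancel₀ hx.ne']
  -- `x` lies below the larger root of `x ^ 2 - (2 + 1/144) x + 1`, which is `< (21/20) ^ 2`.
  have hxle : x ≤ (21 / 20) ^ 2 := by nlinarith
  exact (pow_le_pow_iff_left₀ (norm_nonneg w) (by norm_num) two_ne_zero).mp hxle

end Complex

namespace Polynomial.Chebyshev

theorem T_complex_eval_half_add_inv (n : ℤ) {w : ℂ} (hw : w ≠ 0) :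
    (T ℂ n).eval ((w + w⁻¹) / 2) = (w ^ n + w⁻¹ ^ n) / 2 := by
  have hcosh : Complex.cosh (Complex.log w) = (w + w⁻¹) / 2 := by
    rw [Complex.cosh, Complex.exp_neg, Complex.exp_log hw]
  rw [← hcosh, T_complex_cosh, Complex.cosh, Complex.exp_neg, Complex.exp_int_mul,
    Complex.exp_log hw, _root_.inv_zpow]

theorem norm_T_complex_eval_half_add_inv_le (n : ℕ) {w : ℂ} (hw : w ≠ 0) {ρ : ℝ}
    (hρ : ‖w‖ ≤ ρ) (hρ' : ‖w⁻¹‖ ≤ ρ) :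
    ‖(T ℂ n).eval ((w + w⁻¹) / 2)‖ ≤ ρ ^ n := by
  have h := T_complex_eval_half_add_inv n hw
  rw [zpow_natCast, zpow_natCast] at h
  rw [h, norm_div, Complex.norm_two]
  have : ‖w ^ n + w⁻¹ ^ n‖ ≤ ρ ^ n + ρ ^ n := by
    refine (norm_add_le _ _).trans (add_le_add ?_ ?_) <;> rw [norm_pow] <;> gcongr
  linarith

theorem norm_T_complex_eval_le_of_mem_sector (n : ℕ) {z : ℂ} (hz : ‖z‖ ≤ 1)
    (harg : |z.arg| ≤ (1 / 24) ^ 2) : ‖(T ℂ n).eval z‖ ≤ (21 / 20) ^ n := by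
  have him : ‖z‖ * |z.im| ≤ 1 * (1 * (1 / 24) ^ 2) :=
    mul_le_mul hz ((Complex.abs_im_le_norm_mul_abs_arg z).trans
      (mul_le_mul hz harg (abs_nonneg _) zero_le_one)) (abs_nonneg _) zero_le_one
  obtain ⟨w, hw, rfl, hnorm⟩ := Complex.exists_half_add_inv_eq z
  have hsum : ‖w‖ ^ 2 + ‖w⁻¹‖ ^ 2 ≤ 2 + 1 / 144 := by
    linarith [Complex.norm_sq_add_norm_sq_sub_one_le hz]
  refine norm_T_complex_eval_half_add_inv_le n hw
    (Complex.norm_le_of_norm_sq_add_norm_inv_sq_le hw hsum)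
    (Complex.norm_le_of_norm_sq_add_norm_inv_sq_le (inv_ne_zero hw) ?_)
  rwa [inv_inv, add_comm]

end Polynomial.Chebyshev

theorem seven_tenths_le_two_rpow_neg_half : (7 / 10 : ℝ) ≤ 2 ^ (-(1 : ℝ) / 2) := by
  rw [neg_div, Real.rpow_neg zero_le_two, ← Real.sqrt_eq_rpow,
    le_inv_comm₀ (by norm_num) (by positivity), Real.sqrt_le_iff]
  norm_num

theorem two_mul_pow_le_pow {n : ℕ} (hn : 3 ≤ n) : 2 * (21 / 40 : ℝ) ^ n ≤ (7 / 10) ^ n := by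
  have h : (2 : ℝ) ≤ (4 / 3) ^ n :=
    calc (2 : ℝ) ≤ (4 / 3) ^ 3 := by norm_num
      _ ≤ (4 / 3) ^ n := pow_le_pow_right₀ (by norm_num) hn
  calc 2 * (21 / 40 : ℝ) ^ n ≤ (4 / 3) ^ n * (21 / 40) ^ n := by gcongr
    _ = (7 / 10) ^ n := by rw [← mul_pow]; norm_num

theorem norm_monicCheb_eval_le_of_mem_sector {n : ℕ} (hn : 3 ≤ n) {z : ℂ} (hz : ‖z‖ ≤ 1)
    (harg : |z.arg| ≤ (1 / 24) ^ 2) : ‖(monicCheb n).eval z‖ ≤ 2 ^ (-(n : ℝ) / 2) :=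
  calc ‖(monicCheb n).eval z‖ = 2 * (1 / 2) ^ n * ‖(Chebyshev.T ℂ n).eval z‖ := by
        rw [monicCheb, eval_mul, eval_C, norm_mul, norm_zpow, Complex.norm_two,
          zpow_sub₀ two_ne_zero, zpow_one, zpow_natCast, one_div, inv_pow, div_eq_mul_inv]
    _ ≤ 2 * (1 / 2) ^ n * (21 / 20) ^ n := by
        gcongr; exact Chebyshev.norm_T_complex_eval_le_of_mem_sector n hz harg
    _ = 2 * (21 / 40) ^ n := by rw [mul_assoc, ← mul_pow]; norm_num
    _ ≤ (7 / 10) ^ n := two_mul_pow_le_pow hn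
    _ ≤ (2 ^ (-(1 : ℝ) / 2)) ^ n := by gcongr; exact seven_tenths_le_two_rpow_neg_half
    _ = 2 ^ (-(n : ℝ) / 2) := by rw [← Real.rpow_natCast, ← Real.rpow_mul zero_le_two]; ring_nf

theorem norm_monicCheb_mul_X_pow_eval_le_of_mem_sector {n : ℕ} (hn : 3 ≤ n) (s : ℕ) {z : ℂ}
    (hz : ‖z‖ ≤ 1) (harg : |z.arg| ≤ (1 / 24) ^ 2) :
    ‖(monicCheb n * X ^ s).eval z‖ ≤ 2 ^ (-(n : ℝ) / 2) := by
  rw [eval_mul, eval_X_pow, norm_mul, norm_pow]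
  exact (mul_le_of_le_one_right (norm_nonneg _) (pow_le_one₀ (norm_nonneg z) hz)).trans
    (norm_monicCheb_eval_le_of_mem_sector hn hz harg)

theorem Polynomial.aeval_units_conj {R A : Type*} [CommSemiring R] [Ring A] [Algebra R A]
    (u : Aˣ) (a : A) (p : R[X]) : aeval (↑u * a * ↑u⁻¹) p = ↑u * aeval a p * ↑u⁻¹ :=
  aeval_algEquiv (MulSemiringAction.toAlgEquiv R A (ConjAct.toConjAct u)) a ▸ rfl

theorem Matrix.aeval_diagonal {n R : Type*} [Fintype n] [DecidableEq n] [CommSemiring R]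
    (v : n → R) (p : R[X]) : aeval (diagonal v) p = diagonal fun i ↦ p.eval (v i) := by
  rw [← diagonalAlgHom_apply (R := R), aeval_algHom_apply, diagonalAlgHom_apply, aeval_pi_apply]
  simp only [coe_aeval_eq_eval]

namespace Matrix

variable {n 𝕜 : Type*} [Fintype n] [DecidableEq n] [RCLike 𝕜]

theorem mem_spectrum_of_eq_mul_diagonal_mul_inv {A P : Matrix n n 𝕜} {v : n → 𝕜}
    (hP : IsUnit P) (hA : A = P * diagonal v * P⁻¹) (i : n) : v i ∈ spectrum 𝕜 A := by
  obtain ⟨u, rfl⟩ := hP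
  rw [hA, ← coe_units_inv, spectrum.units_conjugate, spectrum_diagonal]
  exact ⟨i, rfl⟩

theorem norm_aeval_le_of_eq_mul_diagonal_mul_inv {A P : Matrix n n 𝕜} {v : n → 𝕜}
    (hP : IsUnit P) (hA : A = P * diagonal v * P⁻¹) (q : 𝕜[X]) :
    ‖aeval A q‖ ≤ ‖P‖ * ‖P⁻¹‖ * ‖fun i ↦ q.eval (v i)‖ := by
  obtain ⟨u, rfl⟩ := hP
  rw [hA, ← coe_units_inv, aeval_units_conj, aeval_diagonal, mul_right_comm,
    ← l2_opNorm_diagonal]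
  exact (norm_mul_le _ _).trans (by gcongr; exact norm_mul_le _ _)

end Matrix

theorem norm_dotProduct_mulVec_le {d : ℕ} (C B : Fin d → ℂ) (M : Matrix (Fin d) (Fin d) ℂ) :
    ‖C ⬝ᵥ M *ᵥ B‖ ≤ ‖evec C‖ * ‖M‖ * ‖evec B‖ := by
  have hC : ‖WithLp.toLp 2 (star C)‖ = ‖evec C‖ := by
    simp only [evec, EuclideanSpace.norm_eq, WithLp.equiv_symm_apply, Pi.star_apply, norm_star]
  calc ‖C ⬝ᵥ M *ᵥ B‖ = ‖inner ℂ (WithLp.toLp 2 (star C)) (evec (M *ᵥ B))‖ := by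
        rw [evec, WithLp.equiv_symm_apply, EuclideanSpace.inner_toLp_toLp, star_star,
          dotProduct_comm]
    _ ≤ ‖evec C‖ * ‖evec (M *ᵥ B)‖ := hC ▸ norm_inner_le_norm _ _
    _ ≤ ‖evec C‖ * ‖M‖ * ‖evec B‖ := by
        rw [mul_assoc]; gcongr; exact l2_opNorm_mulVec M (evec B)

theorem usp_truncation_error_bound (d : ℕ)
    (A P D : Matrix (Fin d) (Fin d) ℂ)
    (hdiag : D.IsDiag) (hP : IsUnit P) (hA : A = P * D * P⁻¹)
    (hspec : ∀ μ ∈ spectrum ℂ A,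
      ‖μ‖ ≤ 1 ∧ |Complex.arg μ| ≤ ((1 : ℝ) / 24) ^ 2) :
    ∃ N : ℕ, ∀ n : ℕ, N ≤ n → ∀ T t : ℕ, t ≤ T →
      ∀ (C : Fin d → ℂ) (B : Fin d → ℂ) (u : ℕ → ℂ),
        (∀ j, ‖u j‖ ≤ 1) →
        ‖∑ s ∈ Finset.range (t - n),
            (C ⬝ᵥ ((aeval A) (monicCheb n) * A ^ s).mulVec B) * u (t - n - s)‖ ≤
          (2 : ℝ) ^ (-(n : ℝ) / 2) * ‖evec C‖ * ‖evec B‖ * (‖P‖ * ‖P⁻¹‖) * T := by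
  refine ⟨3, fun n hn T t htT C B u hu ↦ ?_⟩
  rw [← hdiag.diagonal_diag] at hA
  set K := ‖evec C‖ * (‖P‖ * ‖P⁻¹‖ * 2 ^ (-(n : ℝ) / 2)) * ‖evec B‖ with hK
  have hterm (s : ℕ) : ‖C ⬝ᵥ ((aeval A) (monicCheb n) * A ^ s) *ᵥ B‖ ≤ K := by
    refine (norm_dotProduct_mulVec_le C B _).trans ?_
    rw [hK, ← aeval_X_pow (R := ℂ), ← map_mul]
    gcongr
    refine (norm_aeval_le_of_eq_mul_diagonal_mul_inv hP hA _).trans ?_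
    gcongr
    refine (pi_norm_le_iff_of_nonneg (by positivity)).mpr fun i ↦ ?_
    obtain ⟨hnorm, harg⟩ := hspec _ (mem_spectrum_of_eq_mul_diagonal_mul_inv hP hA i)
    exact norm_monicCheb_mul_X_pow_eval_le_of_mem_sector hn s hnorm harg
  calc _ ≤ ∑ s ∈ Finset.range (t - n), K := norm_sum_le_of_le _ fun s _ ↦ by
          rw [norm_mul]
          exact (mul_le_of_le_one_right (norm_nonneg _) (hu _)).trans (hterm s)
    _ = (t - n : ℕ) * K := by rw [Finset.sum_const, Finset.card_range, nsmul_eq_mul]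
    _ ≤ T * K := by gcongr; exact_mod_cast (Nat.sub_le t n).trans htT
    _ = _ := by ring
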